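/- arXiv:1806.05905 — 5 statements merged into one kernel-verified Lean document; each statement's English description precedes it below -/
import Mathlib

section
/- Let N ≥ 1 and let M = (M_0,…,M_{N−1}) ∈ ℕ^N be an exponent vector with M_0 + M_1 + ⋯ + M_{N−1} = N. If 0·M_0 + 1·M_1 + 2·M_2 + ⋯ + (N−1)·M_{N−1} is not congruent to 0 modulo N, then the coefficient c_M of x_0^{M_0}⋯x_{N−1}^{M_{N−1}} in det(Circ(x_0,…,x_{N−1})) is zero. -/
/-!
Expanding the determinant over permutations, each term is `± ∏ᵢ x_{i - σ i}`. Giving `x_k`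
weight `k`, this monomial has weight `∑ᵢ (i - σ i) ≡ ∑ᵢ i - ∑ᵢ σ i = 0 (mod N)`, so only
monomials of weight divisible by `N` can occur in the determinant.
-/

/-- The generic `N × N` circulant matrix over `ℤ[x_0, …, x_{N-1}]`:
its `(i,j)` entry is `x_{(j - i) mod N}`. -/
noncomputable def genCirc (N : ℕ) : Matrix (Fin N) (Fin N) (MvPolynomial (Fin N) ℤ) :=
  Matrix.of fun i j => MvPolynomial.X (j - i)

/-- The permanent of the generic `N × N` circulant matrix. -/
noncomputable def genCircPer (N : ℕ) : MvPolynomial (Fin N) ℤ :=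
  ∑ σ : Equiv.Perm (Fin N), ∏ i : Fin N, genCirc N i (σ i)

/-- `d(N)`: number of monomials with nonzero coefficient in the determinant. -/
noncomputable def dNum (N : ℕ) : ℕ := (genCirc N).det.support.card

/-- `p(N)`: number of monomials with nonzero coefficient in the permanent. -/
noncomputable def pNum (N : ℕ) : ℕ := (genCircPer N).support.card

lemma Fin.natCast_val_sub_zmod {N : ℕ} (a b : Fin N) :
    ((a - b).val : ZMod N) = a.val - b.val := by
  rw [Fin.sub_def, ZMod.natCast_mod, Nat.cast_add, Nat.cast_sub b.isLt.le]
  simp [sub_eq_neg_add]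

lemma Finsupp.sum_mul_sum_single_one_apply {ι α : Type*} [Fintype α] [DecidableEq α]
    (s : Finset ι) (f : ι → α) (w : α → ℕ) :
    ∑ k, w k * (∑ i ∈ s, Finsupp.single (f i) 1 : α →₀ ℕ) k = ∑ i ∈ s, w (f i) := by
  simp only [Finsupp.finsetSum_apply, Finset.mul_sum]
  rw [Finset.sum_comm]
  simp [Finsupp.single_apply]

lemma det_genCirc (N : ℕ) :
    (genCirc N).det = ∑ σ : Equiv.Perm (Fin N),
      Equiv.Perm.sign σ • MvPolynomial.monomial (∑ i, Finsupp.single (i - σ i) 1) 1 := by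
  rw [Matrix.det_apply]
  refine Finset.sum_congr rfl fun σ _ => ?_
  rw [MvPolynomial.monomial_sum_one]
  simp [genCirc, MvPolynomial.X]

lemma dvd_weight_sum_single_sub_perm (N : ℕ) (σ : Equiv.Perm (Fin N)) :
    N ∣ ∑ k : Fin N, k.val * (∑ i, Finsupp.single (i - σ i) 1 : Fin N →₀ ℕ) k := by
  rw [Finsupp.sum_mul_sum_single_one_apply, ← ZMod.natCast_eq_zero_iff]
  push_cast
  simp only [Fin.natCast_val_sub_zmod, Finset.sum_sub_distrib]
  rw [Equiv.sum_comp σ (fun i => (i.val : ZMod N)), sub_self]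

theorem stmt2_general (N : ℕ) (M : Fin N →₀ ℕ)
    (hw : ¬ (N ∣ ∑ i : Fin N, i.val * M i)) :
    MvPolynomial.coeff M (genCirc N).det = 0 := by
  rw [det_genCirc, MvPolynomial.coeff_sum]
  refine Finset.sum_eq_zero fun σ _ => ?_
  rw [MvPolynomial.coeff_smul, MvPolynomial.coeff_monomial, if_neg, smul_zero]
  rintro rfl
  exact hw (dvd_weight_sum_single_sub_perm N σ)

/-- If `M_0 + ⋯ + M_{N-1} = N` but `0·M_0 + 1·M_1 + ⋯ + (N-1)·M_{N-1} ≢ 0 (mod N)`,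
then the coefficient of `x_0^{M_0} ⋯ x_{N-1}^{M_{N-1}}` in the determinant of the generic
circulant matrix is zero. -/
theorem stmt2 (N : ℕ) (hN : 1 ≤ N) (M : Fin N →₀ ℕ)
    (hsum : ∑ i, M i = N)
    (hw : ¬ (N ∣ ∑ i : Fin N, i.val * M i)) :
    MvPolynomial.coeff M (genCirc N).det = 0 :=
  stmt2_general N M hw
end

section
/- Let N be a prime number and let M = (M_0,…,M_{N−1}) ∈ ℕ^N be an exponent vector with M_0 + M_1 + ⋯ + M_{N−1} = N and 0·M_0 + 1·M_1 + ⋯ + (N−1)·M_{N−1} ≡ 0 (mod N). Then the coefficient c_M of x_0^{M_0}⋯x_{N−1}^{M_{N−1}} in det(Circ(x_0,…,x_{N−1})) is nonzero. -/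
/-!
Let `ψ(a) = ζ^a` for a primitive `N`-th root of unity `ζ`. The Vandermonde matrix `(ψ(ij))`
diagonalises the circulant, so `det Circ = ∏ᵢ ∑ₖ ψ(ik) xₖ`, and expanding the product gives
`c_M = ∑_g ψ(∑ⱼ j·g(j))`, over the maps `g : ℤ/N → ℤ/N` taking each value `k` exactly `M_k` times.
Let `n_w` count those `g` of weight `∑ⱼ j·g(j) = w`. For `N` prime, precomposing with `j ↦ uj`
shows `n_w = n_1` for `w ≠ 0`, hence `c_M = n_0 - n_1`. If `c_M = 0`, the multinomial
coefficient `N!/∏ M_k! = ∑_w n_w` equals `N n_1`. Precomposing with `j ↦ j + 1` preserves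
weights because `∑ k M_k ≡ 0`, and has no fixed points unless `M` is concentrated in one point;
so `N ∣ n_1` and `N² ∣ N!`, which is absurd. In the concentrated case the multinomial is `1`.
-/

open Finset MvPolynomial Matrix Function

lemma AddChar.map_sum_eq_prod {A M ι : Type*} [AddCommMonoid A] [CommMonoid M] (ψ : AddChar A M)
    (s : Finset ι) (f : ι → A) : ψ (∑ i ∈ s, f i) = ∏ i ∈ s, ψ (f i) :=
  map_prod ψ.toMonoidHom (fun i => Multiplicative.ofAdd (f i)) s

lemma AddChar.sum_mul_eq_sub_of_eq_of_ne_zero {G R : Type*} [AddGroup G] [Fintype G]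
    [DecidableEq G] [CommRing R] [IsDomain R] {ψ : AddChar G R} (hψ : ψ ≠ 1) {n : G → R} {c : R}
    (hn : ∀ w ≠ 0, n w = c) : ∑ w, n w * ψ w = n 0 - c := by
  have hsplit : ∀ w, n w * ψ w = c * ψ w + (n w - c) * ψ w := fun w => by ring
  rw [sum_congr rfl fun w _ => hsplit w, sum_add_distrib, ← mul_sum, sum_eq_zero_of_ne_one hψ,
    mul_zero, zero_add, sum_eq_single 0 (fun w _ hw => by rw [hn w hw, sub_self, zero_mul])
      (by simp), AddChar.map_zero_eq_one, mul_one]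

lemma Nat.Prime.sq_not_dvd_multinomial {α : Type*} {p : ℕ} (hp : p.Prime) {s : Finset α}
    {f : α → ℕ} (hf : ∑ i ∈ s, f i = p) : ¬ p ^ 2 ∣ Nat.multinomial s f := by
  intro h
  have hfac : p ^ 2 ∣ (∑ i ∈ s, f i).factorial :=
    Nat.multinomial_spec s f ▸ dvd_mul_of_dvd_right h _
  rw [hf, ← Nat.mul_factorial_pred hp.ne_zero, sq] at hfac
  have := hp.dvd_factorial.1 (Nat.dvd_of_mul_dvd_mul_left hp.pos hfac)
  have := hp.two_le
  omega

lemma Nat.multinomial_eq_one_of_sum_le {α : Type*} [DecidableEq α] {s : Finset α} {f : α → ℕ}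
    {k : α} (hk : k ∈ s) (hf : ∑ i ∈ s, f i ≤ f k) : Nat.multinomial s f = 1 := by
  rw [Nat.multinomial_congr (g := Pi.single k (f k)), Nat.multinomial_single]
  intro i hi
  rcases eq_or_ne i k with rfl | hik
  · simp
  · have := sum_le_sum_of_subset (f := f) (insert_subset_iff.2 ⟨hi, singleton_subset_iff.2 hk⟩)
    rw [sum_pair hik] at this
    rw [Pi.single_eq_of_ne hik]
    omega

lemma exists_addChar_fin_injective (N : ℕ) [NeZero N] : ∃ ψ : AddChar (Fin N) ℂ, Injective ψ := by
  have hζ := Complex.isPrimitiveRoot_exp N (NeZero.ne N)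
  refine ⟨{ toFun := fun a => _ ^ a.val
            map_zero_eq_one' := pow_zero _
            map_add_eq_mul' := fun a b => by
              rw [Fin.val_add, ← pow_eq_pow_mod _ hζ.pow_eq_one, pow_add] },
    fun a b h => Fin.ext (hζ.pow_inj a.isLt b.isLt h)⟩

section ValueCount

variable {ι σ : Type*} [Fintype ι]

noncomputable def valueCount (g : ι → σ) : σ →₀ ℕ := ∑ i, Finsupp.single (g i) 1

lemma valueCount_apply [DecidableEq σ] (g : ι → σ) (k : σ) :
    valueCount g k = #{i | g i = k} := by
  simp [valueCount, Finsupp.single_apply, Finset.sum_boole]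

lemma valueCount_comp_perm (g : ι → σ) (e : Equiv.Perm ι) : valueCount (g ∘ e) = valueCount g :=
  Equiv.sum_comp e fun i => Finsupp.single (g i) 1

lemma sum_comp_eq_sum_valueCount_smul [Fintype σ] {A : Type*} [AddCommMonoid A] (g : ι → σ)
    (f : σ → A) : ∑ i, f (g i) = ∑ k, valueCount g k • f k := by
  classical
  simp only [valueCount, Finsupp.coe_finsetSum, Finset.sum_apply, Finset.sum_smul]
  rw [Finset.sum_comm]
  refine sum_congr rfl fun i _ => ?_
  simp [Finsupp.single_apply]

lemma prod_X_comp_eq_monomial {R : Type*} [CommSemiring R] (g : ι → σ) :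
    ∏ i, (X (g i) : MvPolynomial σ R) = monomial (valueCount g) 1 := by
  rw [valueCount, monomial_sum_one]
  rfl

lemma coeff_prod_sum_C_mul_X [DecidableEq ι] [Fintype σ] [DecidableEq σ] {R : Type*}
    [CommSemiring R] (c : ι → σ → R) (d : σ →₀ ℕ) :
    coeff d (∏ i, ∑ k, C (c i k) * X k) = ∑ g with valueCount g = d, ∏ i, c i (g i) := by
  simp only [Fintype.prod_sum, prod_mul_distrib, ← map_prod, prod_X_comp_eq_monomial, coeff_sum,
    coeff_C_mul, coeff_monomial, sum_filter]
  refine sum_congr rfl fun g _ => ?_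
  split_ifs <;> simp

lemma card_valueCount_eq_multinomial [DecidableEq ι] [Fintype σ] [DecidableEq σ] {d : σ →₀ ℕ}
    (hd : ∑ k, d k = Fintype.card ι) :
    #{g : ι → σ | valueCount g = d} = Nat.multinomial univ d := by
  have h := coeff_prod_sum_C_mul_X (ι := ι) (R := ℕ) (fun _ _ => 1) d
  simp only [map_one, one_mul, prod_const, card_univ, one_pow, sum_const, smul_eq_mul, mul_one,
    coeff_sum_X_pow_of_fintype, Nat.cast_id, Finsupp.sum_fintype d (fun _ m => m) (fun _ => rfl),
    hd, if_true] at h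
  rw [← h, Finsupp.multinomial_eq_of_support_subset (subset_univ _)]

end ValueCount

section Weight

variable {R : Type*} [CommRing R] [Fintype R]

def weight (g : R → R) : R := ∑ j, j * g j

lemma weight_comp_add_right (g : R → R) (c : R) :
    weight (fun j => g (j + c)) = weight g - c * ∑ j, g j := by
  rw [weight, weight, ← Equiv.sum_comp (Equiv.subRight c), mul_sum, ← sum_sub_distrib]
  refine sum_congr rfl fun j _ => ?_
  simp only [Equiv.subRight_apply, sub_add_cancel]
  ring

lemma weight_comp_mul_left (g : R → R) (u : Rˣ) :
    weight (fun j => g (u * j)) = u⁻¹ * weight g := by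
  rw [weight, weight, ← Equiv.sum_comp (Units.mulLeft u⁻¹), mul_sum]
  refine sum_congr rfl fun j _ => ?_
  simp only [Units.mulLeft_apply, Units.mul_inv_cancel_left]
  ring

noncomputable def weightClass [DecidableEq R] (M : R →₀ ℕ) (w : R) : Finset (R → R) :=
  {g | valueCount g = M ∧ weight g = w}

lemma card_weightClass_unit_mul [DecidableEq R] (M : R →₀ ℕ) (u : Rˣ) (w : R) :
    #(weightClass M (u * w)) = #(weightClass M w) := by
  refine card_equiv ((Units.mulLeft u⁻¹).arrowCongr (Equiv.refl R)) fun g => ?_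
  have hg : (Units.mulLeft u⁻¹).arrowCongr (Equiv.refl R) g = g ∘ Units.mulLeft u := by
    ext j; simp [Units.mulLeft_symm]
  simp only [weightClass, mem_filter, mem_univ, true_and, hg, valueCount_comp_perm]
  rw [show g ∘ Units.mulLeft u = fun j => g (u * j) from rfl, weight_comp_mul_left,
    Units.inv_mul_eq_iff_eq_mul]

lemma sum_comp_weight_eq_sum_card_nsmul [DecidableEq R] {A : Type*} [AddCommMonoid A]
    (M : R →₀ ℕ) (f : R → A) :
    ∑ g with valueCount g = M, f (weight g) = ∑ w, #(weightClass M w) • f w := by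
  rw [← sum_fiberwise' _ weight f]
  refine sum_congr rfl fun w _ => ?_
  rw [sum_const, weightClass, filter_filter]

lemma card_eq_sum_card_weightClass [DecidableEq R] (M : R →₀ ℕ) :
    #{g : R → R | valueCount g = M} = ∑ w, #(weightClass M w) := by
  simpa only [sum_const, smul_eq_mul, mul_one] using
    sum_comp_weight_eq_sum_card_nsmul M fun _ => (1 : ℕ)

end Weight

section FinRing

open Fin.CommRing

variable {N : ℕ} [NeZero N]

theorem det_circulant_eq_prod {R : Type*} [CommRing R] [IsDomain R]
    (ψ : AddChar (Fin N) R) (hψ : Injective ψ) (v : Fin N → R) :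
    (circulant v).det = ∏ i, ∑ k, ψ (i * k) * v k := by
  set V : Matrix (Fin N) (Fin N) R := of fun i j => ψ (i * j)
  have hV : V = vandermonde fun i => ψ i := by
    ext i j
    simp [V, vandermonde, ← AddChar.map_nsmul_eq_pow, nsmul_eq_mul, mul_comm i]
  have hVdet : V.det ≠ 0 := hV ▸ det_vandermonde_ne_zero_iff.2 hψ
  have key : V * circulant v = diagonal (fun i => ∑ k, ψ (i * k) * v k) * V := by
    ext i j
    rw [mul_apply, diagonal_mul, Finset.sum_mul, ← Equiv.sum_comp (Equiv.addRight j)]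
    refine sum_congr rfl fun m _ => ?_
    simp [V, circulant_apply, mul_add, AddChar.map_add_eq_mul]
    ring
  have hdet := congrArg det key
  rw [det_mul, det_mul, det_diagonal, mul_comm] at hdet
  exact mul_right_cancel₀ hVdet hdet

theorem coeff_det_genCirc_eq_sum (ψ : AddChar (Fin N) ℂ) (hψ : Injective ψ) (M : Fin N →₀ ℕ) :
    ((coeff M (genCirc N).det : ℤ) : ℂ) = ∑ g with valueCount g = M, ψ (weight g) := by
  have hmap : MvPolynomial.map (Int.castRingHom ℂ) (genCirc N).det
      = (circulant (X : Fin N → MvPolynomial (Fin N) ℂ)).det := by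
    rw [show genCirc N = (circulant X)ᵀ from rfl, det_transpose, RingHom.map_det,
      RingHom.mapMatrix_apply, map_circulant]
    simp only [map_X]
  have hψC : Injective ((C : ℂ →+* MvPolynomial (Fin N) ℂ).toMonoidHom.compAddChar ψ) :=
    (C_injective _ _).comp hψ
  rw [← eq_intCast (Int.castRingHom ℂ), ← coeff_map, hmap, det_circulant_eq_prod _ hψC]
  simp only [MonoidHom.compAddChar_apply, RingHom.toMonoidHom_eq_coe, MonoidHom.coe_coe,
    Function.comp_apply]
  rw [coeff_prod_sum_C_mul_X]
  exact sum_congr rfl fun g _ => (ψ.map_sum_eq_prod _ _).symm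

lemma sum_eq_zero_of_valueCount_eq {M : Fin N →₀ ℕ} (hM : N ∣ ∑ i : Fin N, i.val * M i)
    {g : Fin N → Fin N} (hg : valueCount g = M) : ∑ j, g j = 0 := by
  obtain ⟨c, hc⟩ := hM
  have hcast : ((∑ i : Fin N, i.val * M i : ℕ) : Fin N) = 0 := by
    rw [hc, Nat.cast_mul, Fin.natCast_self, zero_mul]
  rw [sum_comp_eq_sum_valueCount_smul g fun k => k, hg, ← hcast]
  push_cast
  refine sum_congr rfl fun i _ => ?_
  rw [nsmul_eq_mul, mul_comm]

lemma Fin.apply_eq_apply_zero_of_apply_add_one_eq {α : Type*} {g : Fin N → α}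
    (hg : ∀ j, g (j + 1) = g j) (j : Fin N) : g j = g 0 := by
  suffices ∀ n : ℕ, g n = g 0 by rw [← Fin.cast_val_eq_self j, this]
  intro n
  induction n with
  | zero => rw [Nat.cast_zero]
  | succ n ih => rw [Nat.cast_succ, hg, ih]

lemma Fin.isUnit_of_ne_zero (hp : N.Prime) {w : Fin N} (hw : w ≠ 0) : IsUnit w := by
  have := Fact.mk hp
  have hw' : ZMod.finEquiv N w ≠ 0 := by rwa [map_ne_zero_iff _ (ZMod.finEquiv N).injective]
  simpa using (isUnit_map_iff (ZMod.finEquiv N) w).1 hw'.isUnit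

lemma card_weightClass_eq_of_ne_zero (hp : N.Prime) (M : Fin N →₀ ℕ) {w : Fin N} (hw : w ≠ 0) :
    #(weightClass M w) = #(weightClass M 1) := by
  obtain ⟨u, rfl⟩ := Fin.isUnit_of_ne_zero hp hw
  simpa using card_weightClass_unit_mul M u 1

-- Translating the argument by `1` permutes the weight class (the values of `g` sum to `0`), with
-- no fixed point: a fixed point is constant, i.e. `M` would be concentrated in one point.
lemma prime_dvd_card_weightClass (hp : N.Prime) {M : Fin N →₀ ℕ} (hM : ∀ k, M k < N)
    (hMw : N ∣ ∑ i : Fin N, i.val * M i) (w : Fin N) : N ∣ #(weightClass M w) := by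
  have := Fact.mk hp
  let τ : Equiv.Perm (Fin N → Fin N) := (Equiv.addRight 1).symm.arrowCongr (Equiv.refl _)
  have hτ : ∀ g j, τ g j = g (j + 1) := fun _ _ => rfl
  have hτ_pow : ∀ (n : ℕ) g j, (τ ^ n) g j = g (j + n) := by
    intro n
    induction n with
    | zero => simp
    | succ n ih => intro g j; rw [pow_succ, Equiv.Perm.mul_apply, ih, hτ, Nat.cast_succ, add_assoc]
  have hmem : ∀ g, τ g ∈ weightClass M w ↔ g ∈ weightClass M w := by
    intro g
    simp only [weightClass, mem_filter, mem_univ, true_and]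
    rw [show valueCount (τ g) = valueCount g from valueCount_comp_perm g (Equiv.addRight 1)]
    refine and_congr_right fun hg => ?_
    rw [funext (hτ g), weight_comp_add_right,
      sum_eq_zero_of_valueCount_eq hMw hg, mul_zero, sub_zero]
  have hσ : τ.subtypePerm hmem ^ N ^ 1 = 1 := by
    rw [pow_one, Equiv.Perm.subtypePerm_pow]
    ext g j
    simp [hτ_pow]
  by_contra hndvd
  obtain ⟨⟨g, hg⟩, hfix⟩ := Equiv.Perm.exists_fixed_point_of_prime (by rwa [Fintype.card_coe]) hσ
  have hconst := Fin.apply_eq_apply_zero_of_apply_add_one_eq (congrFun (congrArg Subtype.val hfix))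
  simp only [weightClass, mem_filter, mem_univ, true_and] at hg
  have hcount := valueCount_apply g (g 0)
  rw [hg.1, filter_true_of_mem fun j _ => hconst j, card_univ, Fintype.card_fin] at hcount
  exact (hM _).ne hcount

theorem coeff_det_genCirc_eq_card_sub_card (hp : N.Prime) (M : Fin N →₀ ℕ) :
    coeff M (genCirc N).det = #(weightClass M 0) - #(weightClass M 1) := by
  obtain ⟨ψ, hψ⟩ := exists_addChar_fin_injective N
  have hψ1 : ψ ≠ 1 := by
    have : Nontrivial (Fin N) := Fin.nontrivial_iff_two_le.2 hp.two_le
    intro h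
    exact one_ne_zero (hψ (by rw [h, AddChar.one_apply, AddChar.one_apply]))
  apply Int.cast_injective (α := ℂ)
  rw [coeff_det_genCirc_eq_sum ψ hψ, sum_comp_weight_eq_sum_card_nsmul]
  simp only [nsmul_eq_mul]
  rw [AddChar.sum_mul_eq_sub_of_eq_of_ne_zero hψ1 fun w hw => by
    rw [card_weightClass_eq_of_ne_zero hp M hw]]
  push_cast
  rfl

lemma multinomial_eq_mul_card_weightClass (hp : N.Prime) {M : Fin N →₀ ℕ} (hsum : ∑ i, M i = N)
    (hclass : #(weightClass M 0) = #(weightClass M 1)) :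
    Nat.multinomial univ M = N * #(weightClass M 1) := by
  have hall : ∀ w, #(weightClass M w) = #(weightClass M 1) := by
    intro w
    rcases eq_or_ne w 0 with rfl | hw
    exacts [hclass, card_weightClass_eq_of_ne_zero hp M hw]
  rw [← card_valueCount_eq_multinomial (by rw [hsum, Fintype.card_fin]),
    card_eq_sum_card_weightClass, sum_congr rfl fun w _ => hall w, sum_const, card_univ,
    Fintype.card_fin, smul_eq_mul]

end FinRing

/-- If `N` is prime, `M_0 + ⋯ + M_{N-1} = N` and
`0·M_0 + 1·M_1 + ⋯ + (N-1)·M_{N-1} ≡ 0 (mod N)`, then the coefficient of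
`x_0^{M_0} ⋯ x_{N-1}^{M_{N-1}}` in the determinant of the generic circulant matrix
is nonzero. -/
theorem stmt3 (N : ℕ) (hp : N.Prime) (M : Fin N →₀ ℕ)
    (hsum : ∑ i, M i = N)
    (hw : N ∣ ∑ i : Fin N, i.val * M i) :
    MvPolynomial.coeff M (genCirc N).det ≠ 0 := by
  have : NeZero N := ⟨hp.ne_zero⟩
  rw [coeff_det_genCirc_eq_card_sub_card hp, sub_ne_zero, Ne, Nat.cast_inj]
  intro hclass
  have hcard := multinomial_eq_mul_card_weightClass hp hsum hclass
  by_cases hM : ∀ k, M k < N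
  · obtain ⟨c, hc⟩ := prime_dvd_card_weightClass hp hM hw 1
    exact hp.sq_not_dvd_multinomial hsum ⟨c, by rw [hcard, hc]; ring⟩
  · push Not at hM
    obtain ⟨k, hk⟩ := hM
    have h1 := Nat.multinomial_eq_one_of_sum_le (mem_univ k) (hsum.trans_le hk)
    rw [hcard] at h1
    exact hp.one_lt.ne' (Nat.eq_one_of_mul_eq_one_right h1)
end

section
/- For every integer N ≥ 1, N times the number of vectors (a_0,…,a_{N−1}) ∈ ℕ^N satisfying a_0 + a_1 + ⋯ + a_{N−1} = N and a_0 + 2a_1 + ⋯ + N·a_{N−1} ≡ 0 (mod N) equals ∑_{k | N} φ(N/k)·C(2k−1, k), where φ is Euler's totient function, C(·,·) is the binomial coefficient, and the sum ranges over the positive divisors k of N. -/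
/-!
Filter the congruence with an `N`-th root of unity `ω`: `N` times the count is
`∑_{j<N} ∑_a ω^(j·∑(i+1)aᵢ)`, the sum over all `a` with `∑ aᵢ = N`. If `k = gcd(N, j)`
then `ζ = ω^j` is a primitive `d`-th root of unity with `N = dk`, and the inner sum is the
coefficient of `x^N` in `∏_{i=1}^{N} (1 - ζ^i x)⁻¹ = (1 - x^d)^(-k)`, namely `C(2k-1, k)`.
Exactly `φ(N/k)` residues `j` have `gcd(N, j) = k`.
-/

open Finset

theorem Function.Periodic.prod_range_mul {M : Type*} [CommMonoid M] {f : ℕ → M} {d : ℕ}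
    (hf : Function.Periodic f d) (k : ℕ) :
    ∏ i ∈ range (d * k), f i = (∏ i ∈ range d, f i) ^ k := by
  induction k with
  | zero => simp
  | succ k ih =>
    rw [mul_add_one, prod_range_add, ih, pow_succ]
    congr 1
    refine prod_congr rfl fun i _ => ?_
    simpa [add_comm, mul_comm] using hf.nat_mul k i

section
open Polynomial

theorem IsPrimitiveRoot.prod_one_sub_C_mul_X {K : Type*} [Field K] {ζ α : K} {d : ℕ}
    (hζ : IsPrimitiveRoot ζ d) (hd : 0 < d) (hα : α ^ d = 1) :
    ∏ i ∈ range d, (1 - C (ζ ^ i * α) * X) = 1 - X ^ d := by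
  have hroots := X_pow_sub_C_eq_prod hζ hd hα
  have hroots_inv := X_pow_sub_C_eq_prod hζ.inv hd (by rw [inv_pow, hα, inv_one])
  -- the constant term of `hroots`
  have hsign : ∏ i ∈ range d, -(ζ ^ i * α) = -1 := by
    simpa [eval_prod, zero_pow hd.ne'] using (congrArg (eval 0) hroots).symm
  have hne : ∀ i, ζ ^ i * α ≠ 0 := fun i =>
    mul_ne_zero (pow_ne_zero i (hζ.ne_zero hd.ne')) (by rintro rfl; simp [hd.ne'] at hα)
  have hfactor : ∀ i, 1 - C (ζ ^ i * α) * X = C (-(ζ ^ i * α)) * (X - C (ζ⁻¹ ^ i * α⁻¹)) := by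
    intro i
    rw [inv_pow, ← mul_inv, mul_sub, ← map_mul, neg_mul, mul_inv_cancel₀ (hne i)]
    simp only [map_neg, map_one]
    ring
  rw [prod_congr rfl fun i _ => hfactor i, prod_mul_distrib, ← map_prod, hsign, ← hroots_inv]
  simp

end

namespace PowerSeries

theorem mk_pow_mul_one_sub_C_mul_X {R : Type*} [CommRing R] (c : R) :
    mk (c ^ ·) * (1 - C c * X) = 1 := by
  simpa [rescale_mk, rescale_X] using congrArg (rescale c) (mk_one_mul_one_sub_eq_one R)

theorem one_sub_X_pow_pow_mul_expand_invOneSubPow {R : Type*} [CommRing R]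
    {d : ℕ} (hd : d ≠ 0) (k : ℕ) :
    (1 - X ^ d : R⟦X⟧) ^ k * expand d hd (invOneSubPow R k).val = 1 := by
  have h := congrArg (expand d hd) (invOneSubPow R k).inv_val
  rwa [invOneSubPow_inv_eq_one_sub_pow, map_mul, map_pow, map_sub, map_one, expand_X] at h

end PowerSeries

section
open PowerSeries

variable {K : Type*} [Field K] {ζ : K} {d : ℕ}

theorem IsPrimitiveRoot.prod_range_mul_one_sub_C_pow_succ_mul_X (hζ : IsPrimitiveRoot ζ d)
    (hd : 0 < d) (k : ℕ) :
    ∏ i ∈ range (d * k), (1 - C (ζ ^ (i + 1)) * X) = (1 - X ^ d : K⟦X⟧) ^ k := by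
  have hperiodic : Function.Periodic (fun i : ℕ => (1 - C (ζ ^ (i + 1)) * X : K⟦X⟧)) d := by
    intro i
    simp only [add_right_comm i d, pow_add ζ (i + 1), hζ.pow_eq_one, mul_one]
  rw [hperiodic.prod_range_mul]
  congr 1
  simpa [pow_succ] using congrArg Polynomial.coeToPowerSeries.ringHom
    (hζ.prod_one_sub_C_mul_X hd hζ.pow_eq_one)

theorem IsPrimitiveRoot.coeff_prod_range_mk_pow (hζ : IsPrimitiveRoot ζ d) (hd : 0 < d)
    {k : ℕ} (hk : 0 < k) :
    coeff (d * k) (∏ i ∈ range (d * k), PowerSeries.mk ((ζ ^ (i + 1)) ^ ·)) =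
      ((2 * k - 1).choose k : K) := by
  set F := ∏ i ∈ range (d * k), PowerSeries.mk ((ζ ^ (i + 1)) ^ · : ℕ → K)
  have hF : F * (1 - X ^ d) ^ k = 1 := by
    rw [← hζ.prod_range_mul_one_sub_C_pow_succ_mul_X hd, ← prod_mul_distrib]
    exact prod_eq_one fun i _ => mk_pow_mul_one_sub_C_mul_X _
  rw [left_inv_eq_right_inv hF (one_sub_X_pow_pow_mul_expand_invOneSubPow hd.ne' k),
    coeff_expand_mul, invOneSubPow_val_eq_mk_sub_one_add_choose_of_pos _ _ hk, coeff_mk,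
    show 2 * k - 1 = k - 1 + k by omega, Nat.choose_symm_add]

end

theorem IsPrimitiveRoot.sum_finsuppAntidiag_pow_weight {K : Type*} [Field K] {ζ : K}
    {d k N : ℕ}
    (hζ : IsPrimitiveRoot ζ d) (hd : 0 < d) (hk : 0 < k) (hN : d * k = N) :
    ∑ a ∈ finsuppAntidiag (univ : Finset (Fin N)) N, ζ ^ ∑ i : Fin N, (i.val + 1) * a i =
      ((2 * k - 1).choose k : K) := by
  classical
  subst hN
  rw [← hζ.coeff_prod_range_mk_pow hd hk,
    ← Fin.prod_univ_eq_prod_range (fun i => PowerSeries.mk ((ζ ^ (i + 1)) ^ ·)),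
    PowerSeries.coeff_prod]
  refine sum_congr rfl fun a _ => ?_
  simp only [PowerSeries.coeff_mk, ← pow_mul, prod_pow_eq_pow_sum]

theorem IsPrimitiveRoot.sum_range_pow_pow_eq_ite {R : Type*} [CommRing R] [IsDomain R]
    {ω : R} {N : ℕ} (hω : IsPrimitiveRoot ω N) (w : ℕ) :
    ∑ j ∈ range N, (ω ^ j) ^ w = if N ∣ w then (N : R) else 0 := by
  simp only [pow_right_comm ω _ w]
  split_ifs with h
  · simp [(hω.pow_eq_one_iff_dvd w).mpr h]
  · refine eq_zero_of_ne_zero_of_mul_left_eq_zero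
      (sub_ne_zero.mpr fun h1 => h ((hω.pow_eq_one_iff_dvd w).mp h1.symm)) ?_
    rw [mul_neg_geom_sum, ← pow_mul, mul_comm, pow_mul, hω.pow_eq_one, one_pow, sub_self]

theorem IsPrimitiveRoot.pow_div_gcd {M : Type*} [CommMonoid M] {ω : M} {N : ℕ}
    (hω : IsPrimitiveRoot ω N) (hN : 0 < N) (j : ℕ) : IsPrimitiveRoot (ω ^ j) (N / N.gcd j) := by
  have h := IsPrimitiveRoot.orderOf (ω ^ j)
  rwa [(hω.isOfFinOrder hN.ne').orderOf_pow, ← hω.eq_orderOf] at h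

theorem Nat.sum_range_comp_gcd {M : Type*} [AddCommMonoid M] {N : ℕ} (hN : 0 < N) (c : ℕ → M) :
    ∑ j ∈ range N, c (N.gcd j) = ∑ k ∈ N.divisors, Nat.totient (N / k) • c k := by
  rw [← sum_fiberwise_of_maps_to (g := N.gcd) (t := N.divisors)
    fun j _ => Nat.mem_divisors.mpr ⟨N.gcd_dvd_left j, hN.ne'⟩]
  refine sum_congr rfl fun k hk => ?_
  rw [sum_congr rfl fun j hj => congrArg c (mem_filter.mp hj).2, sum_const,
    ← Nat.totient_div_of_dvd (Nat.dvd_of_mem_divisors hk)]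

theorem Nat.card_finsupp_sum_eq_and {ι : Type*} [Fintype ι] [DecidableEq ι] (n : ℕ)
    (p : (ι →₀ ℕ) → Prop) [DecidablePred p] :
    Nat.card {a : ι →₀ ℕ // ∑ i, a i = n ∧ p a} = #{a ∈ finsuppAntidiag univ n | p a} := by
  rw [← Nat.card_eq_finsetCard]
  exact Nat.card_congr <| Equiv.subtypeEquivRight fun a => by simp [mem_finsuppAntidiag]

/-- Brualdi–Newman formula: for every `N ≥ 1`, `N` times the number of vectors
`(a_0, …, a_{N-1}) ∈ ℕ^N` with `a_0 + ⋯ + a_{N-1} = N` and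
`a_0 + 2a_1 + ⋯ + N·a_{N-1} ≡ 0 (mod N)` equals `∑_{k ∣ N} φ(N/k)·C(2k-1, k)`. -/
theorem stmt12 (N : ℕ) (hN : 1 ≤ N) :
    N * Nat.card {a : Fin N →₀ ℕ //
        (∑ i, a i) = N ∧ N ∣ ∑ i : Fin N, (i.val + 1) * a i} =
      ∑ k ∈ N.divisors, Nat.totient (N / k) * Nat.choose (2 * k - 1) k := by
  classical
  set weight : (Fin N →₀ ℕ) → ℕ := fun a => ∑ i : Fin N, (i.val + 1) * a i
  have hω := Complex.isPrimitiveRoot_exp N (by omega)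
  set ω := Complex.exp (2 * Real.pi * Complex.I / N)
  rw [Nat.card_finsupp_sum_eq_and N (fun a => N ∣ weight a)]
  apply Nat.cast_injective (R := ℂ)
  push_cast
  calc (N : ℂ) * #{a ∈ finsuppAntidiag univ N | N ∣ weight a}
      = ∑ a ∈ finsuppAntidiag univ N, ∑ j ∈ range N, (ω ^ j) ^ weight a := by
        simp only [hω.sum_range_pow_pow_eq_ite, sum_ite, sum_const_zero, add_zero, sum_const,
          nsmul_eq_mul, mul_comm]
    _ = ∑ j ∈ range N, ∑ a ∈ finsuppAntidiag univ N, (ω ^ j) ^ weight a := sum_comm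
    _ = ∑ j ∈ range N, ((2 * N.gcd j - 1).choose (N.gcd j) : ℂ) := by
        refine sum_congr rfl fun j _ => ?_
        have hgcd : 0 < N.gcd j := Nat.gcd_pos_of_pos_left j (by omega)
        exact (hω.pow_div_gcd (by omega) j).sum_finsuppAntidiag_pow_weight
          (Nat.div_pos (Nat.gcd_le_left j (by omega)) hgcd) hgcd
          (Nat.div_mul_cancel (N.gcd_dvd_left j))
    _ = ∑ k ∈ N.divisors, (Nat.totient (N / k) : ℂ) * ((2 * k - 1).choose k : ℂ) := by
        simp only [Nat.sum_range_comp_gcd (by omega : 0 < N)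
          (fun k => ((2 * k - 1).choose k : ℂ)), nsmul_eq_mul]
end

section
/- For every integer N ≥ 3, the number of vectors (a_0,…,a_{N−1}) ∈ ℕ^N satisfying a_0 + a_1 + ⋯ + a_{N−1} = N and 0·a_0 + 1·a_1 + ⋯ + (N−1)·a_{N−1} ≡ 0 (mod N) is at most C(2N−2, N−2), the binomial coefficient 2N−2 choose N−2. -/
/-!
Merging the first two coordinates, `a ↦ (a₀ + a₁, a₂, …, a_{N-1})`, sends the admissible tuples
to tuples in `ℕ^{N-1}` with sum `N`, of which there are `C(2N-2, N-2)` by stars and bars.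
The merged tuple determines `a₂, …, a_{N-1}`, hence `a₁` modulo `N` through the weighted-sum
condition, hence `a₁` itself unless `a₁ ∈ {0, N}`. So the only collision is between `N e₀` and
`N e₁`; sending `N e₁` instead to `e₀ + (N-1) e₁`, which is not the merge of any admissible
tuple when `N ≥ 3`, gives an injection.
-/

open Finset

def mergeFirstTwo {m : ℕ} (a : Fin (m + 2) → ℕ) : Fin (m + 1) → ℕ :=
  Fin.cons (a 0 + a 1) (Fin.tail (Fin.tail a))

lemma mergeFirstTwo_eq_iff {m : ℕ} (a : Fin (m + 2) → ℕ) (x : ℕ) (b : Fin m → ℕ) :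
    mergeFirstTwo a = Fin.cons x b ↔ a 0 + a 1 = x ∧ Fin.tail (Fin.tail a) = b :=
  Fin.cons_inj

lemma sum_mergeFirstTwo {m : ℕ} (a : Fin (m + 2) → ℕ) :
    ∑ j, mergeFirstTwo a j = ∑ i, a i := by
  simp [mergeFirstTwo, Fin.sum_univ_succ, Fin.tail, add_assoc]

lemma sum_val_mul_eq {m : ℕ} (a : Fin (m + 2) → ℕ) :
    ∑ i : Fin (m + 2), i.val * a i = a 1 + ∑ j : Fin m, (j.val + 2) * Fin.tail (Fin.tail a) j := by
  simp [Fin.sum_univ_succ, Fin.tail, Fin.val_succ]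

lemma eq_of_mergeFirstTwo_eq {m : ℕ} {a a' : Fin (m + 2) → ℕ}
    (h : mergeFirstTwo a = mergeFirstTwo a') (h1 : a 1 = a' 1) : a = a' := by
  obtain ⟨h01, htail⟩ := (mergeFirstTwo_eq_iff a _ _).1 h
  rw [← Fin.cons_self_tail a, ← Fin.cons_self_tail (Fin.tail a), ← Fin.cons_self_tail a',
    ← Fin.cons_self_tail (Fin.tail a'), htail]
  simp only [Fin.tail, Fin.succ_zero_eq_one, Fin.cons_inj, and_true] at h1 ⊢
  omega

lemma eq_of_mergeFirstTwo_eq_of_dvd {m N : ℕ} {a a' : Fin (m + 2) → ℕ}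
    (ha : N ∣ ∑ i : Fin (m + 2), i.val * a i) (ha' : N ∣ ∑ i : Fin (m + 2), i.val * a' i)
    (h1 : a 1 < N) (h1' : a' 1 < N) (h : mergeFirstTwo a = mergeFirstTwo a') : a = a' := by
  refine eq_of_mergeFirstTwo_eq h ?_
  have htail := ((mergeFirstTwo_eq_iff a _ _).1 h).2
  rw [sum_val_mul_eq, htail, ← Nat.modEq_zero_iff_dvd] at ha
  rw [sum_val_mul_eq, ← Nat.modEq_zero_iff_dvd] at ha'
  exact ((ha.trans ha'.symm).add_right_cancel' _).eq_of_lt_of_lt h1 h1'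

lemma not_dvd_of_mergeFirstTwo_eq (n : ℕ) {a : Fin (n + 3) → ℕ}
    (h : mergeFirstTwo a = Fin.cons 1 (Fin.cons (n + 2) 0)) :
    ¬ (n + 3) ∣ ∑ i : Fin (n + 3), i.val * a i := by
  obtain ⟨h01, htail⟩ := (mergeFirstTwo_eq_iff a _ _).1 h
  have hweighted : ∑ i : Fin (n + 3), i.val * a i = a 1 + 2 * (n + 2) := by
    rw [sum_val_mul_eq, htail]
    simp [Fin.sum_univ_succ]
  rw [hweighted]
  rintro ⟨c, hc⟩
  rcases Nat.lt_or_ge c 2 with hc2 | hc2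
  · interval_cases c <;> omega
  · nlinarith

lemma eq_pi_single_of_sum_eq {ι : Type*} [Fintype ι] [DecidableEq ι] {a : ι → ℕ} {i : ι}
    (h : ∑ j, a j = a i) : a = Pi.single i (a i) := by
  rw [← Finset.add_sum_erase _ _ (mem_univ i), add_eq_left, Finset.sum_eq_zero_iff] at h
  ext j
  by_cases hj : j = i
  · subst hj; simp
  · simp [hj, h j (by simp [hj])]

instance finite_sum_eq (ι : Type*) [Fintype ι] (s : ℕ) :
    Finite {b : ι → ℕ // ∑ i, b i = s} :=
  have := Classical.decEq ι
  Finite.of_equiv _ (Sym.equivNatSumOfFintype ι s)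

lemma card_sum_eq_choose (ι : Type*) [Fintype ι] (s : ℕ) :
    Nat.card {b : ι → ℕ // ∑ i, b i = s} = (Fintype.card ι + s - 1).choose s := by
  classical
  rw [← Nat.card_congr (Sym.equivNatSumOfFintype ι s), Nat.card_eq_fintype_card,
    Sym.card_sym_eq_choose]

def encodeAdmissible (n : ℕ)
    (a : {a : Fin (n + 3) → ℕ // ∑ i, a i = n + 3 ∧ (n + 3) ∣ ∑ i : Fin (n + 3), i.val * a i}) :
    {b : Fin (n + 2) → ℕ // ∑ j, b j = n + 3} :=
  if a.1 1 = n + 3 then ⟨Fin.cons 1 (Fin.cons (n + 2) 0), by simp [Fin.sum_cons]; omega⟩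
  else ⟨mergeFirstTwo a.1, (sum_mergeFirstTwo a.1).trans a.2.1⟩

lemma encodeAdmissible_injective (n : ℕ) : Function.Injective (encodeAdmissible n) := by
  have hlt : ∀ a : Fin (n + 3) → ℕ, ∑ i, a i = n + 3 → a 1 ≠ n + 3 → a 1 < n + 3 :=
    fun a hs h1 => lt_of_le_of_ne
      ((single_le_sum (fun _ _ => Nat.zero_le _) (mem_univ 1)).trans_eq hs) h1
  rintro ⟨a, hs, hd⟩ ⟨a', hs', hd'⟩ h
  simp only [encodeAdmissible] at h
  split_ifs at h with h1 h1' h1'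
  · congr
    rw [eq_pi_single_of_sum_eq (hs.trans h1.symm), eq_pi_single_of_sum_eq (hs'.trans h1'.symm),
      h1, h1']
  · exact absurd hd' (not_dvd_of_mergeFirstTwo_eq n (congrArg Subtype.val h).symm)
  · exact absurd hd (not_dvd_of_mergeFirstTwo_eq n (congrArg Subtype.val h))
  · exact Subtype.ext <| eq_of_mergeFirstTwo_eq_of_dvd hd hd' (hlt a hs h1) (hlt a' hs' h1')
      (congrArg Subtype.val h)

/-- For every `N ≥ 3`, the number of vectors `(a_0, …, a_{N-1}) ∈ ℕ^N` with
`a_0 + ⋯ + a_{N-1} = N` and `0·a_0 + 1·a_1 + ⋯ + (N-1)·a_{N-1} ≡ 0 (mod N)` is at most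
the binomial coefficient `C(2N-2, N-2)`. -/
theorem stmt14 (N : ℕ) (hN : 3 ≤ N) :
    Nat.card {a : Fin N →₀ ℕ //
        (∑ i, a i) = N ∧ N ∣ ∑ i : Fin N, i.val * a i} ≤
      Nat.choose (2 * N - 2) (N - 2) := by
  obtain ⟨n, rfl⟩ : ∃ n, N = n + 3 := ⟨N - 3, by omega⟩
  have hcard : Nat.card {b : Fin (n + 2) → ℕ // ∑ j, b j = n + 3} =
      (2 * (n + 3) - 2).choose (n + 3 - 2) := by
    rw [card_sum_eq_choose, Fintype.card_fin, Nat.choose_symm_of_eq_add (b := n + 1) (by omega)]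
    congr 1
    omega
  rw [← hcard]
  exact (Nat.card_congr (Finsupp.equivFunOnFinite.subtypeEquiv fun _ => Iff.rfl)).trans_le
    (Nat.card_le_card_of_injective _ (encodeAdmissible_injective n))
end

section
/- Let N ≥ 3 and d ≥ N be integers, let e ∈ ℂ be a primitive d-th root of unity, and let α_0,…,α_{N−1} be integers. Let I ⊆ ℂ[x_0,…,x_{N−1}] be the ideal generated by all monomials x_0^{m_0}⋯x_{N−1}^{m_{N−1}} of total degree d with α_0 m_0 + ⋯ + α_{N−1} m_{N−1} ≡ 0 (mod d). Then there exists a nonzero homogeneous polynomial F of degree d−1 such that (x_0 + x_1 + ⋯ + x_{N−1})·F ∈ I. -/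
open MvPolynomial Finset Function

/-! With `ℓ_k = ∑ e^{k α_i} x_i`, take `F = ℓ_1 ⋯ ℓ_{d-1}`. The substitution `x_i ↦ e^{α_i} x_i`
sends `ℓ_k` to `ℓ_{k+1}`, and `ℓ_d = ℓ_0 = x_0 + ⋯ + x_{N-1}`, so it permutes the factors of
`ℓ_0 F` cyclically and fixes it. A polynomial fixed by the substitution has only invariant
monomials, and `ℓ_0 F` is homogeneous of degree `d`, hence lies in `I`. -/

theorem Finset.isFixedPt_prod_range_iterate {M F : Type*} [CommMonoid M] [FunLike F M M]
    [MonoidHomClass F M M] {f : F} {n : ℕ} {x : M} (hx : IsPeriodicPt f n x) :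
    IsFixedPt f (∏ k ∈ range n, f^[k] x) := by
  cases n with
  | zero => rw [IsFixedPt, range_zero, prod_empty, map_one]
  | succ n =>
    calc f (∏ k ∈ range (n + 1), f^[k] x)
        = ∏ k ∈ range (n + 1), f^[k + 1] x := by simp only [map_prod, iterate_succ_apply']
      _ = (∏ k ∈ range n, f^[k + 1] x) * f^[n + 1] x := prod_range_succ _ _
      _ = ∏ k ∈ range (n + 1), f^[k] x := by rw [hx.eq, prod_range_succ', iterate_zero_apply]

namespace MvPolynomial

variable {σ R : Type*} [CommSemiring R]

noncomputable def twist (c : Rˣ) (α : σ → ℤ) : MvPolynomial σ R →ₐ[R] MvPolynomial σ R :=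
  aeval fun i => C (↑(c ^ α i) : R) * X i

variable (c c' : Rˣ) (α : σ → ℤ)

theorem twist_X (i : σ) : twist c α (X i : MvPolynomial σ R) = C (↑(c ^ α i) : R) * X i :=
  aeval_X _ i

theorem twist_monomial (m : σ →₀ ℕ) (a : R) :
    twist c α (monomial m a) = monomial m (↑(c ^ Finsupp.weight α m) * a) := by
  induction m using Finsupp.induction generalizing a with
  | zero => simp [twist]
  | single_add i k m _ _ ih =>
    rw [monomial_single_add, map_mul, ih, map_pow, twist_X, mul_pow, ← C_pow,
      mul_assoc, ← monomial_single_add, C_mul_monomial, ← mul_assoc, map_add,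
      Finsupp.weight_single, zpow_add, nsmul_eq_mul, mul_comm (k : ℤ), zpow_mul, zpow_natCast,
      Units.val_mul, Units.val_pow_eq_pow_val]

theorem coeff_twist (m : σ →₀ ℕ) (p : MvPolynomial σ R) :
    coeff m (twist c α p) = ↑(c ^ Finsupp.weight α m) * coeff m p := by
  classical
  induction p using MvPolynomial.induction_on' with
  | monomial n a =>
    rw [twist_monomial, coeff_monomial, coeff_monomial]
    split_ifs with h <;> simp [h]
  | add p q hp hq => rw [map_add, coeff_add, coeff_add, hp, hq, mul_add]

theorem twist_twist (p : MvPolynomial σ R) : twist c α (twist c' α p) = twist (c * c') α p := by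
  ext m
  simp only [coeff_twist, mul_zpow, Units.val_mul, mul_assoc]

theorem twist_one (p : MvPolynomial σ R) : twist 1 α p = p := by
  ext m
  simp [coeff_twist]

theorem iterate_twist (k : ℕ) (p : MvPolynomial σ R) : (twist c α)^[k] p = twist (c ^ k) α p := by
  induction k with
  | zero => rw [iterate_zero_apply, pow_zero, twist_one]
  | succ k ih => rw [iterate_succ_apply', ih, twist_twist, pow_succ']

theorem twist_injective : Injective (twist c α : MvPolynomial σ R → MvPolynomial σ R) :=
  LeftInverse.injective (g := twist c⁻¹ α) fun p => by rw [twist_twist, inv_mul_cancel, twist_one]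

theorem isPeriodicPt_twist {d : ℕ} (hc : c ^ d = 1) (p : MvPolynomial σ R) :
    IsPeriodicPt (twist c α) d p := by
  rw [IsPeriodicPt, IsFixedPt, iterate_twist, hc, twist_one]

theorem IsHomogeneous.twist {p : MvPolynomial σ R} {n : ℕ} (hp : p.IsHomogeneous n) :
    (twist c α p).IsHomogeneous n := fun m hm =>
  hp (right_ne_zero_of_mul (coeff_twist c α m p ▸ hm))

theorem dvd_weight_of_twist_eq_self [IsRightCancelMulZero R] {d : ℕ} (hc : IsPrimitiveRoot c d)
    {p : MvPolynomial σ R} (hp : twist c α p = p) {m : σ →₀ ℕ} (hm : m ∈ p.support) :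
    (d : ℤ) ∣ Finsupp.weight α m := by
  rw [← hc.zpow_eq_one_iff_dvd, ← Units.val_eq_one]
  have h := coeff_twist c α m p
  rw [hp] at h
  exact (mul_eq_right₀ (mem_support_iff.mp hm)).mp h.symm

theorem mem_span_invariant_monomials [IsRightCancelMulZero R] [Fintype σ] {d : ℕ}
    (hc : IsPrimitiveRoot c d) {p : MvPolynomial σ R} (hhom : p.IsHomogeneous d)
    (hfix : twist c α p = p) :
    p ∈ Ideal.span {g | ∃ m : σ →₀ ℕ, (∑ i, m i) = d ∧ ((d : ℤ) ∣ ∑ i, α i * m i) ∧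
      g = monomial m 1} := by
  have hspan : {g : MvPolynomial σ R | ∃ m : σ →₀ ℕ, (∑ i, m i) = d ∧
      ((d : ℤ) ∣ ∑ i, α i * m i) ∧ g = monomial m 1} =
      (fun m => monomial m 1) '' {m | (∑ i, m i) = d ∧ (d : ℤ) ∣ ∑ i, α i * m i} := by
    ext g
    simp [eq_comm, and_assoc]
  rw [hspan, mem_ideal_span_monomial_image]
  intro m hm
  refine ⟨m, ⟨?_, ?_⟩, le_rfl⟩
  · simpa [Finsupp.weight_eq_sum] using hhom (mem_support_iff.mp hm)
  · simpa [Finsupp.weight_eq_sum, mul_comm] using dvd_weight_of_twist_eq_self c α hc hfix hm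

theorem sum_X_ne_zero [Fintype σ] [Nonempty σ] [Nontrivial R] :
    (∑ i, X i : MvPolynomial σ R) ≠ 0 := fun h => by
  classical
  obtain ⟨i⟩ := ‹Nonempty σ›
  simpa [coeff_sum, coeff_X, Finsupp.single_left_inj] using
    congr_arg (coeff (Finsupp.single i 1)) h

end MvPolynomial

/-- Let `I ⊆ ℂ[x_0, …, x_{N-1}]` be the ideal generated by all monomials of total degree
`d` invariant under `x_i ↦ e^{α_i} x_i`, i.e. with `α_0 m_0 + ⋯ + α_{N-1} m_{N-1} ≡ 0
(mod d)`, where `e` is a primitive `d`-th root of unity. Then there is a nonzero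
homogeneous `F` of degree `d - 1` with `(x_0 + ⋯ + x_{N-1})·F ∈ I`. -/
theorem stmt18 (N d : ℕ) (hN : 3 ≤ N) (hd : N ≤ d) (e : ℂ) (he : IsPrimitiveRoot e d)
    (α : Fin N → ℤ) :
    ∃ F : MvPolynomial (Fin N) ℂ, F ≠ 0 ∧ F.IsHomogeneous (d - 1) ∧
      (∑ i : Fin N, MvPolynomial.X i) * F ∈
        Ideal.span {g : MvPolynomial (Fin N) ℂ | ∃ m : Fin N →₀ ℕ,
          (∑ i, m i) = d ∧ ((d : ℤ) ∣ ∑ i : Fin N, α i * m i) ∧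
          g = MvPolynomial.monomial m 1} := by
  have hd0 : 0 < d := by omega
  have : Nonempty (Fin N) := ⟨⟨0, by omega⟩⟩
  set u : ℂˣ := (he.isUnit hd0.ne').unit
  have hu : IsPrimitiveRoot u d := IsPrimitiveRoot.coe_units_iff.mp he
  set L : MvPolynomial (Fin N) ℂ := ∑ i, X i
  have hL : ∀ k, (twist u α)^[k] L ≠ 0 := fun k => by
    rw [iterate_twist, map_ne_zero_iff _ (twist_injective _ α)]
    exact sum_X_ne_zero
  have hLhom : ∀ k, ((twist u α)^[k] L).IsHomogeneous 1 := fun k => by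
    rw [iterate_twist]
    exact (IsHomogeneous.sum _ _ _ fun i _ => isHomogeneous_X ℂ i).twist _ α
  set F := ∏ k ∈ range (d - 1), (twist u α)^[k + 1] L
  have hFhom : F.IsHomogeneous (d - 1) := by
    simpa only [sum_const, card_range, smul_eq_mul, mul_one] using
      IsHomogeneous.prod (range (d - 1)) _ (fun _ => 1) fun k _ => hLhom (k + 1)
  have hLF : L * F = ∏ k ∈ range d, (twist u α)^[k] L := by
    conv_rhs => rw [← Nat.sub_add_cancel hd0]
    rw [prod_range_succ', iterate_zero_apply, mul_comm]
  refine ⟨F, prod_ne_zero_iff.mpr fun k _ => hL (k + 1), hFhom, hLF ▸ ?_⟩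
  refine mem_span_invariant_monomials u α hu ?_ ?_
  · simpa only [hLF, iterate_zero_apply, Nat.add_sub_cancel' hd0] using (hLhom 0).mul hFhom
  · exact isFixedPt_prod_range_iterate (isPeriodicPt_twist u α hu.pow_eq_one L)
end
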